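/- Let (X, ≪, ≤, d, τ) be a globally hyperbolic Lorentzian length space, let (x_n) be a sequence in X with x_n ≪ x_{n+1} for all n, and suppose some subsequence (x_{n(k)}) converges to a point x_∞ ∈ X. Then ⋂_{k} J⁺(x_{n(k)}) ∩ J⁻(x_∞) = {x_∞}. -/
import Mathlib


open Set Filter Topology
open scoped ENNReal NNReal

noncomputable section

/-- A Lorentzian pre-length space structure on a metric space `X`:
relations `chron` (≪) and `causal` (≤) and a time separation function `tau`. -/
structure LorentzianPreLength (X : Type*) [MetricSpace X] where
  chron : X → X → Prop
  causal : X → X → Prop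
  chron_trans : ∀ {x y z : X}, chron x y → chron y z → chron x z
  causal_refl : ∀ x : X, causal x x
  causal_trans : ∀ {x y z : X}, causal x y → causal y z → causal x z
  chron_imp_causal : ∀ {x y : X}, chron x y → causal x y
  tau : X → X → ℝ≥0∞
  tau_lsc : LowerSemicontinuous fun p : X × X => tau p.1 p.2
  tau_rev_triangle : ∀ {x y z : X}, causal x y → causal y z → tau x y + tau y z ≤ tau x z
  tau_pos_iff : ∀ x y : X, 0 < tau x y ↔ chron x y
  tau_eq_zero_of_not_causal : ∀ x y : X, ¬ causal x y → tau x y = 0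

namespace LorentzianPreLength

variable {X : Type*} [MetricSpace X] (S : LorentzianPreLength X)

/-- `x < y`, i.e. `x ≤ y` and `x ≠ y`. -/
def strictCausal (x y : X) : Prop := S.causal x y ∧ x ≠ y

/-- Locally Lipschitz on a set. -/
def LocLipOn (γ : ℝ → X) (I : Set ℝ) : Prop :=
  ∀ t ∈ I, ∃ K : ℝ≥0, ∃ U ∈ 𝓝[I] t, LipschitzOnWith K γ U

/-- Future-directed causal curve defined on the interval `I`. -/
def IsCausalCurveOn (γ : ℝ → X) (I : Set ℝ) : Prop :=
  I.OrdConnected ∧ (∃ s ∈ I, ∃ t ∈ I, γ s ≠ γ t) ∧ LocLipOn γ I ∧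
    ∀ ⦃s⦄, s ∈ I → ∀ ⦃t⦄, t ∈ I → s < t → S.causal (γ s) (γ t)

/-- Future-directed timelike curve defined on the interval `I`. -/
def IsTimelikeCurveOn (γ : ℝ → X) (I : Set ℝ) : Prop :=
  I.OrdConnected ∧ (∃ s ∈ I, ∃ t ∈ I, γ s ≠ γ t) ∧ LocLipOn γ I ∧
    ∀ ⦃s⦄, s ∈ I → ∀ ⦃t⦄, t ∈ I → s < t → S.chron (γ s) (γ t)

/-- Past-directed causal curve defined on the interval `I`. -/
def IsPastCausalCurveOn (γ : ℝ → X) (I : Set ℝ) : Prop :=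
  I.OrdConnected ∧ (∃ s ∈ I, ∃ t ∈ I, γ s ≠ γ t) ∧ LocLipOn γ I ∧
    ∀ ⦃s⦄, s ∈ I → ∀ ⦃t⦄, t ∈ I → s < t → S.causal (γ t) (γ s)

/-- τ-length of a future-directed causal curve on `[a,b]`. -/
def tauLength (γ : ℝ → X) (a b : ℝ) : ℝ≥0∞ :=
  ⨅ (n : ℕ) (t : Fin (n + 1) → ℝ) (_ : StrictMono t) (_ : t 0 = a)
    (_ : t (Fin.last n) = b), ∑ i : Fin n, S.tau (γ (t i.castSucc)) (γ (t i.succ))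

/-- τ-length of a past-directed causal curve on `[a,b]`. -/
def tauLengthPast (γ : ℝ → X) (a b : ℝ) : ℝ≥0∞ :=
  ⨅ (n : ℕ) (t : Fin (n + 1) → ℝ) (_ : StrictMono t) (_ : t 0 = a)
    (_ : t (Fin.last n) = b), ∑ i : Fin n, S.tau (γ (t i.succ)) (γ (t i.castSucc))

/-- d-length of a curve on `[a,b]`. -/
def dLength (γ : ℝ → X) (a b : ℝ) : ℝ≥0∞ :=
  ⨆ (n : ℕ) (t : Fin (n + 1) → ℝ) (_ : StrictMono t) (_ : t 0 = a)
    (_ : t (Fin.last n) = b), ∑ i : Fin n, edist (γ (t i.castSucc)) (γ (t i.succ))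

/-- Future-directed causal geodesic: every parameter has a compact subinterval
neighborhood on which the curve is maximal. -/
def IsGeodesicOn (γ : ℝ → X) (I : Set ℝ) : Prop :=
  S.IsCausalCurveOn γ I ∧ ∀ t ∈ I, ∃ a b : ℝ, a < b ∧ Icc a b ⊆ I ∧ Icc a b ∈ 𝓝[I] t ∧
    S.tauLength γ a b = S.tau (γ a) (γ b)

/-- Past-directed causal geodesic. -/
def IsPastGeodesicOn (γ : ℝ → X) (I : Set ℝ) : Prop :=
  S.IsPastCausalCurveOn γ I ∧ ∀ t ∈ I, ∃ a b : ℝ, a < b ∧ Icc a b ⊆ I ∧ Icc a b ∈ 𝓝[I] t ∧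
    S.tauLengthPast γ a b = S.tau (γ b) (γ a)

/-- `p` and `q` are joined by a future-directed causal curve contained in `U`. -/
def CausallyJoinedIn (U : Set X) (p q : X) : Prop :=
  ∃ (γ : ℝ → X) (a b : ℝ), a < b ∧ S.IsCausalCurveOn γ (Icc a b) ∧
    (∀ t ∈ Icc a b, γ t ∈ U) ∧ γ a = p ∧ γ b = q

def CausallyPathConnected : Prop :=
  (∀ x y : X, S.chron x y → ∃ (γ : ℝ → X) (a b : ℝ), a < b ∧
      S.IsTimelikeCurveOn γ (Icc a b) ∧ γ a = x ∧ γ b = y) ∧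
  (∀ x y : X, S.strictCausal x y → ∃ (γ : ℝ → X) (a b : ℝ), a < b ∧
      S.IsCausalCurveOn γ (Icc a b) ∧ γ a = x ∧ γ b = y)

def LocallyWeaklyCausallyClosed : Prop :=
  ∀ x : X, ∃ U ∈ 𝓝 x, ∀ (p q : X) (pn qn : ℕ → X),
    (∀ n, pn n ∈ U) → (∀ n, qn n ∈ U) → p ∈ U → q ∈ U →
    Tendsto pn atTop (𝓝 p) → Tendsto qn atTop (𝓝 q) →
    (∀ n, S.CausallyJoinedIn U (pn n) (qn n)) →
    p = q ∨ S.CausallyJoinedIn U p q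

def Localizable : Prop :=
  ∀ x : X, ∃ Ω : Set X, IsOpen Ω ∧ x ∈ Ω ∧
    (∃ C : ℝ, 0 < C ∧ ∀ (γ : ℝ → X) (a b : ℝ), a < b → S.IsCausalCurveOn γ (Icc a b) →
      (∀ t ∈ Icc a b, γ t ∈ Ω) → dLength γ a b ≤ ENNReal.ofReal C) ∧
    (∃ ω : X → X → ℝ≥0∞,
      ContinuousOn (fun p : X × X => ω p.1 p.2) (Ω ×ˢ Ω) ∧
      (∀ p ∈ Ω, ∀ q ∈ Ω, ω p q ≠ ⊤) ∧
      (∀ p ∈ Ω, ∀ q ∈ Ω, ∀ r ∈ Ω, S.causal p q → S.causal q r → ω p q + ω q r ≤ ω p r) ∧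
      (∀ p ∈ Ω, ∀ q ∈ Ω, (0 < ω p q ↔ S.chron p q)) ∧
      (∀ p ∈ Ω, ∀ q ∈ Ω, ¬ S.causal p q → ω p q = 0) ∧
      (∀ y ∈ Ω, (∃ z ∈ Ω, S.chron y z) ∧ (∃ z ∈ Ω, S.chron z y)) ∧
      (∀ p ∈ Ω, ∀ q ∈ Ω, S.strictCausal p q →
        ∃ (γ : ℝ → X) (a b : ℝ), a < b ∧ S.IsCausalCurveOn γ (Icc a b) ∧
          γ a = p ∧ γ b = q ∧
          (∀ (lam : ℝ → X) (c d : ℝ), c < d → S.IsCausalCurveOn lam (Icc c d) →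
            (∀ t ∈ Icc c d, lam t ∈ Ω) → lam c = p → lam d = q →
            S.tauLength lam c d ≤ S.tauLength γ a b) ∧
          S.tauLength γ a b = ω p q ∧ ω p q ≤ S.tau p q))

/-- τ is the supremum of τ-lengths of connecting causal curves (0 if there are none). -/
def IsLengthLike : Prop :=
  ∀ x y : X, S.tau x y = ⨆ (γ : ℝ → X) (a : ℝ) (b : ℝ) (_ : a < b)
    (_ : S.IsCausalCurveOn γ (Icc a b)) (_ : γ a = x) (_ : γ b = y), S.tauLength γ a b

/-- Lorentzian length space. -/
def IsLorentzianLengthSpace : Prop :=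
  S.CausallyPathConnected ∧ S.LocallyWeaklyCausallyClosed ∧ S.Localizable ∧ S.IsLengthLike

def NonTotallyImprisoning : Prop :=
  ∀ K : Set X, IsCompact K → ∃ C : ℝ, 0 < C ∧
    ∀ (γ : ℝ → X) (a b : ℝ), a < b → S.IsCausalCurveOn γ (Icc a b) →
      (∀ t ∈ Icc a b, γ t ∈ K) → dLength γ a b ≤ ENNReal.ofReal C

def GloballyHyperbolic : Prop :=
  S.NonTotallyImprisoning ∧ ∀ x y : X, IsCompact {z : X | S.causal x z ∧ S.causal z y}

def FinitelyCompact : Prop :=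
  ∀ B : ℝ, 0 < B → ∀ p q : X, ∀ x : ℕ → X,
    ((∀ n, S.chron p q ∧ S.causal q (x n) ∧ S.tau p (x n) ≤ ENNReal.ofReal B) →
      ∃ z : X, MapClusterPt z atTop x) ∧
    ((∀ n, S.causal (x n) q ∧ S.chron q p ∧ S.tau (x n) p ≤ ENNReal.ofReal B) →
      ∃ z : X, MapClusterPt z atTop x)

def TimelikeCauchyComplete : Prop :=
  ∀ (x : ℕ → X) (B : ℕ → ℝ), (∀ n, 0 ≤ B n) → Tendsto B atTop (𝓝 0) →
    (((∀ n, S.chron (x n) (x (n + 1))) ∧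
        ∀ n m : ℕ, 0 < m → S.tau (x n) (x (n + m)) ≤ ENNReal.ofReal (B n)) ∨
      ((∀ n, S.chron (x (n + 1)) (x n)) ∧
        ∀ n m : ℕ, 0 < m → S.tau (x (n + m)) (x n) ≤ ENNReal.ofReal (B n))) →
    ∃ l : X, Tendsto x atTop (𝓝 l)

/-- A future-directed causal curve defined on `[0,c)` (where `c ∈ (0,∞]`) is future
extendible if it extends to a future-directed causal curve on `[0,c]`. -/
def FutureExtendibleFrom (γ : ℝ → X) (c : ℝ≥0∞) : Prop :=
  c ≠ ⊤ ∧ ∃ γ' : ℝ → X, S.IsCausalCurveOn γ' (Icc 0 c.toReal) ∧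
    ∀ t : ℝ, 0 ≤ t → ENNReal.ofReal t < c → γ' t = γ t

def PastExtendibleFrom (γ : ℝ → X) (c : ℝ≥0∞) : Prop :=
  c ≠ ⊤ ∧ ∃ γ' : ℝ → X, S.IsPastCausalCurveOn γ' (Icc 0 c.toReal) ∧
    ∀ t : ℝ, 0 ≤ t → ENNReal.ofReal t < c → γ' t = γ t

/-- Condition A. The domain `{t | 0 ≤ t ∧ ofReal t < c}` is `[0,c)`, and
`comap ENNReal.ofReal (𝓝[<] c)` is the filter of `t → c` from below
(`atTop` when `c = ∞`). -/
def ConditionA : Prop :=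
  (∀ x y : X, S.chron x y → ∀ c : ℝ≥0∞, 0 < c → ∀ γ : ℝ → X,
    S.IsGeodesicOn γ {t : ℝ | 0 ≤ t ∧ ENNReal.ofReal t < c} → γ 0 = y →
    ¬ S.FutureExtendibleFrom γ c →
    Tendsto (fun t : ℝ => S.tau x (γ t)) (comap ENNReal.ofReal (𝓝[<] c)) (𝓝 ⊤)) ∧
  (∀ x y : X, S.chron y x → ∀ c : ℝ≥0∞, 0 < c → ∀ γ : ℝ → X,
    S.IsPastGeodesicOn γ {t : ℝ | 0 ≤ t ∧ ENNReal.ofReal t < c} → γ 0 = y →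
    ¬ S.PastExtendibleFrom γ c →
    Tendsto (fun t : ℝ => S.tau (γ t) x) (comap ENNReal.ofReal (𝓝[<] c)) (𝓝 ⊤))

end LorentzianPreLength
namespace LorentzianPreLength

variable {X : Type*} [MetricSpace X] {S : LorentzianPreLength X}

lemma chron_of_lt {x : ℕ → X} (hchain : ∀ n, S.chron (x n) (x (n + 1))) :
    ∀ {a b : ℕ}, a < b → S.chron (x a) (x b) := by
  intro a b hab
  induction b with
  | zero => omega
  | succ b ih =>
    rcases Nat.lt_succ_iff_lt_or_eq.mp hab with h | h
    · exact S.chron_trans (ih h) (hchain b)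
    · subst h; exact hchain a

lemma LocLipOn.continuousOn {γ : ℝ → X} {I : Set ℝ} (h : LocLipOn γ I) :
    ContinuousOn γ I := by
  intro t ht
  obtain ⟨K, U, hU, hL⟩ := h t ht
  have htU : t ∈ U := by
    rcases mem_nhdsWithin.mp hU with ⟨V, hVo, htV, hVsub⟩
    exact hVsub ⟨htV, ht⟩
  exact (hL.continuousOn t htU).mono_of_mem_nhdsWithin hU

lemma IsCausalCurveOn.restrict {γ : ℝ → X} {a b a' b' : ℝ}
    (h : S.IsCausalCurveOn γ (Icc a b)) (ha : a ≤ a') (hb : b' ≤ b)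
    (hlt : a' < b') (hne : γ a' ≠ γ b') : S.IsCausalCurveOn γ (Icc a' b') := by
  have hsub : Icc a' b' ⊆ Icc a b := Icc_subset_Icc ha hb
  refine ⟨ordConnected_Icc, ⟨a', ⟨le_refl _, hlt.le⟩, b', ⟨hlt.le, le_refl _⟩, hne⟩, ?_, ?_⟩
  · intro t htI
    obtain ⟨K, U, hU, hL⟩ := h.2.2.1 t (hsub htI)
    exact ⟨K, U, nhdsWithin_mono t hsub hU, hL⟩
  · exact fun s hs t' ht' hlt' => h.2.2.2 (hsub hs) (hsub ht') hlt'

lemma causal_of_joined {U : Set X} {p q : X} (h : S.CausallyJoinedIn U p q) :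
    S.causal p q := by
  obtain ⟨γ, a, b, hab, hcurve, _, rfl, rfl⟩ := h
  exact hcurve.2.2.2 ⟨le_refl a, hab.le⟩ ⟨hab.le, le_refl b⟩ hab

lemma covering {K : Set X} (hK : IsCompact K) {P : Set X → Prop}
    (H : ∀ z : X, ∃ U ∈ 𝓝 z, P U) :
    ∃ δ : ℝ, 0 < δ ∧ ∀ w ∈ K, ∃ U, P U ∧ Metric.ball w δ ⊆ U := by
  classical
  choose U hU hP using H
  choose r hr hball using fun z => Metric.mem_nhds_iff.mp (hU z)
  obtain ⟨t, -, htcov⟩ := hK.elim_nhds_subcover (fun z => Metric.ball z (r z / 2))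
    (fun z _ => Metric.ball_mem_nhds z (by linarith [hr z]))
  by_cases hne : t.Nonempty
  · refine ⟨t.inf' hne (fun z => r z / 2), ?_, ?_⟩
    · rw [Finset.lt_inf'_iff]
      exact fun z _ => by linarith [hr z]
    · intro w hw
      obtain ⟨z, hz, hwz⟩ := Set.mem_iUnion₂.mp (htcov hw)
      refine ⟨U z, hP z, fun u hu => hball z ?_⟩
      have h1 : dist u w < r z / 2 := lt_of_lt_of_le (Metric.mem_ball.mp hu)
        (Finset.inf'_le _ hz)
      have h2 : dist w z < r z / 2 := Metric.mem_ball.mp hwz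
      exact Metric.mem_ball.mpr (by calc dist u z ≤ dist u w + dist w z := dist_triangle _ _ _
        _ < r z := by linarith)
  · refine ⟨1, one_pos, fun w hw => absurd (htcov hw) ?_⟩
    rw [Finset.not_nonempty_iff_eq_empty] at hne
    simp [hne]

lemma causal_lim (hLoc : S.Localizable)
    {x : ℕ → X} (hchain : ∀ n, S.chron (x n) (x (n + 1)))
    {n : ℕ → ℕ} (hn : StrictMono n) {xinf : X}
    (hconv : Tendsto (fun k => x (n k)) atTop (𝓝 xinf)) (k : ℕ) :
    S.chron (x (n k)) xinf := by
  obtain ⟨Ω, hΩo, hΩx, -, ω, hωc, hωfin, hωtri, hωpos, hωzero, -, -⟩ := hLoc xinf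
  have hev : ∀ᶠ j in atTop, x (n j) ∈ Ω := hconv.eventually (hΩo.mem_nhds hΩx)
  obtain ⟨N, hN⟩ := eventually_atTop.mp hev
  set m := max (k + 1) N with hm
  have hmN : N ≤ m := le_max_right _ _
  have hkm : k < m := lt_of_lt_of_le (Nat.lt_succ_self k) (le_max_left _ _)
  have hx : ∀ a b : ℕ, a < b → S.chron (x (n a)) (x (n b)) :=
    fun a b h => chron_of_lt hchain (hn h)
  have hε : 0 < ω (x (n m)) (x (n (m + 1))) :=
    (hωpos _ (hN m hmN) _ (hN _ (by omega))).2 (hx m (m + 1) (by omega))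
  have hlb : ∀ᶠ j in atTop, ω (x (n m)) (x (n (m + 1))) ≤ ω (x (n m)) (x (n j)) := by
    filter_upwards [eventually_ge_atTop (m + 2)] with j hj
    have h1 := hωtri _ (hN m hmN) _ (hN (m + 1) (by omega)) _ (hN j (by omega))
      (S.chron_imp_causal (hx m (m + 1) (by omega)))
      (S.chron_imp_causal (hx (m + 1) j (by omega)))
    exact le_trans le_self_add h1
  have ht : Tendsto (fun j => ω (x (n m)) (x (n j))) atTop (𝓝 (ω (x (n m)) xinf)) := by
    have hc : ContinuousWithinAt (fun p : X × X => ω p.1 p.2) (Ω ×ˢ Ω) (x (n m), xinf) :=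
      hωc _ ⟨hN m hmN, hΩx⟩
    have h2 : Tendsto (fun j => (x (n m), x (n j))) atTop (𝓝[Ω ×ˢ Ω] (x (n m), xinf)) := by
      rw [tendsto_nhdsWithin_iff]
      refine ⟨tendsto_const_nhds.prodMk_nhds hconv, ?_⟩
      filter_upwards [hev] with j hj
      exact ⟨hN m hmN, hj⟩
    exact hc.tendsto.comp h2
  have hge := ge_of_tendsto ht hlb
  have hch : S.chron (x (n m)) xinf :=
    (hωpos _ (hN m hmN) _ hΩx).1 (lt_of_lt_of_le hε hge)
  exact S.chron_trans (hx k m hkm) hch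


lemma step_spec {γ : ℝ → X} {a b η : ℝ} (hη : 0 < η) (hab : a ≤ b)
    (hcont : ContinuousOn γ (Icc a b)) (s : Icc a b) :
    ∃ s' : Icc a b, s.1 ≤ s'.1 ∧ (∀ t ∈ Icc s.1 s'.1, dist (γ t) (γ s.1) ≤ η) ∧
      (s'.1 < b → η ≤ dist (γ s'.1) (γ s.1)) := by
  classical
  set Q := {t | t ∈ Icc s.1 b ∧ η ≤ dist (γ t) (γ s.1)} with hQdef
  have hsub : Icc s.1 b ⊆ Icc a b := Icc_subset_Icc s.2.1 le_rfl
  have hQc : IsClosed Q := by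
    have hEq : Q = Icc s.1 b ∩ (fun t => dist (γ t) (γ s.1)) ⁻¹' Ici η := by
      ext t; simp [hQdef, Set.mem_setOf_eq, Set.mem_Ici]
    rw [hEq]
    have hdc : ContinuousOn (fun t => dist (γ t) (γ s.1)) (Icc s.1 b) :=
      (continuous_id.dist continuous_const).comp_continuousOn (hcont.mono hsub)
    exact ContinuousOn.preimage_isClosed_of_isClosed hdc isClosed_Icc isClosed_Ici
  have hbdd : BddBelow Q := ⟨s.1, fun t ht => ht.1.1⟩
  by_cases hQn : Q.Nonempty
  · set v := sInf Q with hv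
    have hvQ : v ∈ Q := hQc.csInf_mem hQn hbdd
    have hsv : s.1 < v := by
      rcases lt_or_eq_of_le hvQ.1.1 with h | h
      · exact h
      · exfalso
        have := hvQ.2
        rw [← h] at this
        simp at this
        linarith
    refine ⟨⟨v, hsub hvQ.1⟩, hvQ.1.1, ?_, fun _ => hvQ.2⟩
    have hlt : ∀ t ∈ Ico s.1 v, dist (γ t) (γ s.1) ≤ η := by
      intro t ht
      have htQ : t ∉ Q := notMem_of_lt_csInf ht.2 hbdd
      have htI : t ∈ Icc s.1 b := ⟨ht.1, le_trans ht.2.le hvQ.1.2⟩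
      by_contra hc
      exact htQ ⟨htI, le_of_lt (lt_of_not_ge hc)⟩
    have hvle : dist (γ v) (γ s.1) ≤ η := by
      have hcw : ContinuousWithinAt γ (Ico s.1 v) v :=
        (hcont v (hsub hvQ.1)).mono (fun w hw => hsub ⟨hw.1, hw.2.le.trans hvQ.1.2⟩)
      have hmem : v ∈ closure (Ico s.1 v) := by
        rw [closure_Ico hsv.ne]
        exact ⟨hsv.le, le_rfl⟩
      have himg : γ '' Ico s.1 v ⊆ Metric.closedBall (γ s.1) η := by
        rintro _ ⟨w, hw, rfl⟩
        exact Metric.mem_closedBall.mpr (hlt w hw)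
      have h5 := hcw.mem_closure_image hmem
      have h6 := (closure_minimal himg Metric.isClosed_closedBall) h5
      exact Metric.mem_closedBall.mp h6
    intro t ht
    rcases lt_or_eq_of_le ht.2 with h | h
    · exact hlt t ⟨ht.1, h⟩
    · rw [h]; exact hvle
  · refine ⟨⟨b, right_mem_Icc.mpr hab⟩, s.2.2, ?_, fun h => absurd h (lt_irrefl b)⟩
    intro t ht
    by_contra hc
    exact hQn ⟨t, ⟨ht.1, ht.2⟩, le_of_lt (lt_of_not_ge hc)⟩

lemma sample_times {γ : ℝ → X} {a b : ℝ} (hab : a < b)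
    (hcurve : S.IsCausalCurveOn γ (Icc a b))
    {C η : ℝ} (hC : 0 < C) (hη : 0 < η) {M : ℕ} (hM : C < M * η)
    (hlen : dLength γ a b ≤ ENNReal.ofReal C) :
    ∃ T : ℕ → ℝ, T 0 = a ∧ T M = b ∧ (∀ j, T j ≤ T (j + 1)) ∧ (∀ j, T j ∈ Icc a b) ∧
      (∀ j, ∀ t ∈ Icc (T j) (T (j + 1)), dist (γ t) (γ (T j)) ≤ η) := by
  classical
  have hcont : ContinuousOn γ (Icc a b) := hcurve.2.2.1.continuousOn
  choose step h1 h2 h3 using step_spec hη hab.le hcont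
  let T' : ℕ → Icc a b := fun j => Nat.rec ⟨a, left_mem_Icc.mpr hab.le⟩ (fun _ s => step s) j
  have hT'succ : ∀ j, T' (j + 1) = step (T' j) := fun j => rfl
  set T : ℕ → ℝ := fun j => (T' j).1 with hTdef
  have hTle : ∀ j, T j ≤ T (j + 1) := fun j => h1 (T' j)
  have hTmono : Monotone T := monotone_nat_of_le_succ hTle
  have hTmem : ∀ j, T j ∈ Icc a b := fun j => (T' j).2
  have hT0 : T 0 = a := rfl
  have hTseg : ∀ j, ∀ t ∈ Icc (T j) (T (j + 1)), dist (γ t) (γ (T j)) ≤ η :=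
    fun j => h2 (T' j)
  refine ⟨T, hT0, ?_, hTle, hTmem, hTseg⟩
  -- counting argument
  by_contra hTM
  have hTMlt : T M < b := lt_of_le_of_ne (hTmem M).2 hTM
  have hstep : ∀ j, j < M → η ≤ dist (γ (T (j + 1))) (γ (T j)) := by
    intro j hj
    have hjm : j + 1 ≤ M := hj
    have hle : T (j + 1) ≤ T M := hTmono hjm
    exact h3 (T' j) (lt_of_le_of_lt hle hTMlt)
  have hTstrict : ∀ j, j < M → T j < T (j + 1) := by
    intro j hj
    rcases lt_or_eq_of_le (hTle j) with h | h
    · exact h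
    · exfalso
      have := hstep j hj
      rw [← h] at this
      simp at this
      linarith
  -- build the partition
  set u : Fin (M + 2) → ℝ := fun i => if (i : ℕ) ≤ M then T i else b with hu
  have humono : StrictMono u := by
    rw [Fin.strictMono_iff_lt_succ]
    intro i
    have hic : (i.castSucc : ℕ) = (i : ℕ) := rfl
    have his : (i.succ : ℕ) = (i : ℕ) + 1 := rfl
    have hiM : (i : ℕ) < M + 1 := i.isLt
    by_cases h : (i : ℕ) + 1 ≤ M
    · have hile : (i : ℕ) ≤ M := by omega
      have e1 : u i.castSucc = T i := by simp [hu, hic, hile]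
      have e2 : u i.succ = T ((i : ℕ) + 1) := by simp [hu, his, h]
      rw [e1, e2]
      exact hTstrict i (by omega)
    · have hieq : (i : ℕ) = M := by omega
      have e1 : u i.castSucc = T M := by simp [hu, hic, hieq]
      have e2 : u i.succ = b := by simp [hu, his, h]
      rw [e1, e2]
      exact hTMlt
  have hu0 : u 0 = a := by simp [hu]; exact hT0
  have hulast : u (Fin.last (M + 1)) = b := by
    simp [hu, Fin.last]
  -- the partition sum bounds dLength from below
  have hsum : ∑ i : Fin (M + 1), edist (γ (u i.castSucc)) (γ (u i.succ)) ≤ dLength γ a b := by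
    rw [dLength]
    refine le_iSup_of_le (M + 1) ?_
    refine le_iSup_of_le u ?_
    refine le_iSup_of_le humono ?_
    refine le_iSup_of_le hu0 ?_
    exact le_iSup_of_le hulast le_rfl
  have hterm : ∀ i : Fin (M + 1), (i : ℕ) < M →
      ENNReal.ofReal η ≤ edist (γ (u i.castSucc)) (γ (u i.succ)) := by
    intro i hi
    have hile : (i : ℕ) ≤ M := by omega
    have hile2 : (i : ℕ) + 1 ≤ M := by omega
    have e1 : u i.castSucc = T i := by simp [hu, hile]
    have e2 : u i.succ = T ((i : ℕ) + 1) := by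
      have his : (i.succ : ℕ) = (i : ℕ) + 1 := rfl
      simp [hu, his, hile2]
    rw [e1, e2, edist_dist]
    apply ENNReal.ofReal_le_ofReal
    rw [dist_comm]
    exact hstep i hi
  have hlb : (M : ℝ≥0∞) * ENNReal.ofReal η ≤
      ∑ i : Fin (M + 1), edist (γ (u i.castSucc)) (γ (u i.succ)) := by
    have : (M : ℝ≥0∞) * ENNReal.ofReal η
        = ∑ i : Fin (M + 1), (if (i : ℕ) < M then ENNReal.ofReal η else 0) := by
      rw [Fin.sum_univ_castSucc]
      simp only [Fin.coe_castSucc, Fin.val_last]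
      rw [Finset.sum_ite_of_true (by intro i _; exact i.isLt)]
      simp [Finset.sum_const, mul_comm]
    rw [this]
    apply Finset.sum_le_sum
    intro i _
    by_cases h : (i : ℕ) < M
    · simp only [h, if_true]
      exact hterm i h
    · simp [h]
  have hfin : (M : ℝ≥0∞) * ENNReal.ofReal η ≤ ENNReal.ofReal C :=
    le_trans hlb (le_trans hsum hlen)
  have hfin2 : ENNReal.ofReal (M * η) ≤ ENNReal.ofReal C := by
    rwa [ENNReal.ofReal_mul (by positivity), ENNReal.ofReal_natCast]
  have hfin3 := (ENNReal.ofReal_le_ofReal_iff hC.le).mp hfin2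
  linarith


lemma causal_limit_of_curves
    (hWCC : S.LocallyWeaklyCausallyClosed) (hNTI : S.NonTotallyImprisoning)
    {K : Set X} (hK : IsCompact K)
    {p : ℕ → X} {q : X} {pl : X} (hconv : Tendsto p atTop (𝓝 pl))
    (curves : ∀ k, ∃ γ : ℝ → X, ∃ a b : ℝ, a < b ∧ S.IsCausalCurveOn γ (Icc a b) ∧
      γ a = p k ∧ γ b = q ∧ ∀ t ∈ Icc a b, γ t ∈ K) :
    S.causal pl q := by
  classical
  obtain ⟨C, hC, hbound⟩ := hNTI K hK
  -- covering by weak-causal-closedness neighborhoods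
  obtain ⟨δ, hδ, hcov⟩ := covering hK hWCC
  set η : ℝ := δ / 8 with hηdef
  have hη : 0 < η := by positivity
  set M : ℕ := ⌈C / η⌉₊ + 1 with hMdef
  have hηδ : η < δ := by rw [hηdef]; linarith
  have h2ηδ : 2 * η < δ := by rw [hηdef]; linarith
  have hM : C < M * η := by
    have h1 : C / η ≤ (⌈C / η⌉₊ : ℝ) := Nat.le_ceil _
    have h2 : C ≤ (⌈C / η⌉₊ : ℝ) * η := by
      calc C = (C / η) * η := by field_simp
        _ ≤ (⌈C / η⌉₊ : ℝ) * η := mul_le_mul_of_nonneg_right h1 hη.le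
    have h3 : (M : ℝ) = (⌈C / η⌉₊ : ℝ) + 1 := by rw [hMdef]; push_cast; ring
    rw [h3]
    nlinarith
  choose γs as bs habs hcurve hγa hγb hmem using curves
  have hlen : ∀ k, dLength (γs k) (as k) (bs k) ≤ ENNReal.ofReal C :=
    fun k => hbound (γs k) (as k) (bs k) (habs k) (hcurve k) (hmem k)
  choose T hT0 hTM hTle hTmem hTseg using
    fun k => sample_times (habs k) (hcurve k) hC hη hM (hlen k)
  set V : ℕ → Fin (M + 1) → X := fun k i => γs k (T k i) with hVdef
  have hVmem : ∀ k, V k ∈ Set.pi univ (fun _ : Fin (M + 1) => K) := by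
    intro k
    rw [Set.mem_univ_pi]
    intro i
    exact hmem k _ (hTmem k i)
  obtain ⟨w, hwP, φ, hφ, hVconv⟩ :=
    (isCompact_univ_pi (fun _ : Fin (M + 1) => hK)).tendsto_subseq hVmem
  have hcomp : ∀ i : Fin (M + 1), Tendsto (fun l => V (φ l) i) atTop (𝓝 (w i)) :=
    fun i => (tendsto_pi_nhds.mp hVconv) i
  have hwK : ∀ i, w i ∈ K := fun i => hwP i (mem_univ i)
  -- endpoints
  have hw0 : w 0 = pl := by
    have he : (fun l => V (φ l) (0 : Fin (M + 1))) = fun l => p (φ l) := by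
      funext l
      show γs (φ l) (T (φ l) ((0 : Fin (M + 1)) : ℕ)) = p (φ l)
      rw [show ((0 : Fin (M + 1)) : ℕ) = 0 from rfl, hT0, hγa]
    have h2 := hcomp 0
    rw [he] at h2
    exact tendsto_nhds_unique h2 (hconv.comp hφ.tendsto_atTop)
  have hwM : w (Fin.last M) = q := by
    have he : (fun l => V (φ l) (Fin.last M)) = fun _ => q := by
      funext l
      show γs (φ l) (T (φ l) ((Fin.last M : Fin (M + 1)) : ℕ)) = q
      rw [show ((Fin.last M : Fin (M + 1)) : ℕ) = M from rfl, hTM, hγb]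
    have h2 := hcomp (Fin.last M)
    rw [he] at h2
    exact tendsto_nhds_unique h2 tendsto_const_nhds
  -- step relations
  have hstep : ∀ i : Fin M, w i.castSucc = w i.succ ∨ S.causal (w i.castSucc) (w i.succ) := by
    intro i
    have hic : (i.castSucc : ℕ) = (i : ℕ) := rfl
    have his : (i.succ : ℕ) = (i : ℕ) + 1 := rfl
    have hseg' : ∀ k, dist (V k i.succ) (V k i.castSucc) ≤ η := by
      intro k
      show dist (γs k (T k (i.succ : ℕ))) (γs k (T k (i.castSucc : ℕ))) ≤ η
      rw [hic, his]
      exact hTseg k i _ ⟨hTle k i, le_rfl⟩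
    by_cases hfreq : ∃ᶠ l in atTop, V (φ l) i.castSucc = V (φ l) i.succ
    · left
      obtain ⟨ψ, hψ, hall⟩ := Filter.extraction_of_frequently_atTop hfreq
      have h1 : Tendsto (fun l => V (φ (ψ l)) i.castSucc) atTop (𝓝 (w i.castSucc)) :=
        (hcomp i.castSucc).comp hψ.tendsto_atTop
      have h2 : Tendsto (fun l => V (φ (ψ l)) i.castSucc) atTop (𝓝 (w i.succ)) := by
        have h3 : (fun l => V (φ (ψ l)) i.castSucc) = fun l => V (φ (ψ l)) i.succ := by
          funext l; exact hall l
        rw [h3]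
        exact (hcomp i.succ).comp hψ.tendsto_atTop
      exact tendsto_nhds_unique h1 h2
    · rw [Filter.not_frequently] at hfreq
      obtain ⟨U, hUP, hball⟩ := hcov (w i.castSucc) (hwK i.castSucc)
      have hclose : ∀ᶠ l in atTop, dist (V (φ l) i.castSucc) (w i.castSucc) < η :=
        Metric.tendsto_nhds.mp (hcomp i.castSucc) η hη
      obtain ⟨L, hL⟩ := eventually_atTop.mp (hfreq.and hclose)
      set pn : ℕ → X := fun l => V (φ (l + L)) i.castSucc with hpn
      set qn : ℕ → X := fun l => V (φ (l + L)) i.succ with hqn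
      have hLl : ∀ l : ℕ, ¬ V (φ (l + L)) i.castSucc = V (φ (l + L)) i.succ ∧
          dist (V (φ (l + L)) i.castSucc) (w i.castSucc) < η :=
        fun l => hL (l + L) (by omega)
      have hpnU : ∀ l, pn l ∈ U := by
        intro l
        apply hball
        have := (hLl l).2
        exact Metric.mem_ball.mpr (lt_trans this hηδ)
      have hqnU : ∀ l, qn l ∈ U := by
        intro l
        apply hball
        have h1 := hseg' (φ (l + L))
        have h2 := (hLl l).2
        refine Metric.mem_ball.mpr ?_
        calc dist (qn l) (w i.castSucc) ≤ dist (qn l) (pn l) + dist (pn l) (w i.castSucc) :=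
              dist_triangle _ _ _
          _ < η + η := by exact add_lt_add_of_le_of_lt h1 h2
          _ < δ := by linarith
      have hpltendsto : Tendsto pn atTop (𝓝 (w i.castSucc)) :=
        (hcomp i.castSucc).comp (tendsto_add_atTop_nat L)
      have hqltendsto : Tendsto qn atTop (𝓝 (w i.succ)) :=
        (hcomp i.succ).comp (tendsto_add_atTop_nat L)
      have hpU : w i.castSucc ∈ U := hball (Metric.mem_ball_self hδ)
      have hqU : w i.succ ∈ U := by
        apply hball
        have hd : Tendsto (fun l => dist (qn l) (w i.castSucc)) atTop
            (𝓝 (dist (w i.succ) (w i.castSucc))) := hqltendsto.dist tendsto_const_nhds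
        have hub : ∀ l : ℕ, dist (qn l) (w i.castSucc) ≤ 2 * η := by
          intro l
          have h1 := hseg' (φ (l + L))
          have h2 := (hLl l).2
          calc dist (qn l) (w i.castSucc) ≤ dist (qn l) (pn l) + dist (pn l) (w i.castSucc) :=
                dist_triangle _ _ _
            _ ≤ 2 * η := by linarith
        have := le_of_tendsto hd (Filter.Eventually.of_forall hub)
        exact Metric.mem_ball.mpr (lt_of_le_of_lt this h2ηδ)
      have hjoined : ∀ l, S.CausallyJoinedIn U (pn l) (qn l) := by
        intro l
        set k := φ (l + L) with hk
        refine ⟨γs k, T k ((i.castSucc : ℕ)), T k ((i.succ : ℕ)), ?_, ?_, ?_, rfl, rfl⟩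
        · -- strict inequality of times
          rw [hic, his]
          rcases lt_or_eq_of_le (hTle k i) with h | h
          · exact h
          · exfalso
            apply (hLl l).1
            show γs k (T k (i.castSucc : ℕ)) = γs k (T k (i.succ : ℕ))
            rw [hic, his, h]
        · -- restricted causal curve
          rw [hic, his]
          refine (hcurve k).restrict (hTmem k i).1 (hTmem k ((i : ℕ) + 1)).2
            ?_ ?_
          · rcases lt_or_eq_of_le (hTle k i) with h | h
            · exact h
            · exfalso
              apply (hLl l).1
              show γs k (T k (i.castSucc : ℕ)) = γs k (T k (i.succ : ℕ))
              rw [hic, his, h]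
          · have := (hLl l).1
            intro hcontra
            exact this (by rw [hic, his] at *; exact hcontra)
        · -- containment in U
          rw [hic, his]
          intro t ht
          apply hball
          have h1 : dist (γs k t) (γs k (T k (i : ℕ))) ≤ η := hTseg k i t ht
          have h2 : dist (γs k (T k (i : ℕ))) (w i.castSucc) < η := by
            have := (hLl l).2
            rw [← hk] at this
            exact this
          refine Metric.mem_ball.mpr ?_
          calc dist (γs k t) (w i.castSucc)
              ≤ dist (γs k t) (γs k (T k (i : ℕ))) + dist (γs k (T k (i : ℕ))) (w i.castSucc) :=
                dist_triangle _ _ _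
            _ < η + η := add_lt_add_of_le_of_lt h1 h2
            _ < δ := by linarith
      have := hUP (w i.castSucc) (w i.succ) pn qn hpnU hqnU hpU hqU
        hpltendsto hqltendsto hjoined
      rcases this with h | h
      · exact Or.inl h
      · exact Or.inr (causal_of_joined h)
  -- chain the steps
  have hchainw : ∀ j : ℕ, ∀ hj : j ≤ M, S.causal (w 0) (w ⟨j, by omega⟩) := by
    intro j
    induction j with
    | zero => intro _; exact S.causal_refl _
    | succ j ih =>
      intro hj
      have hjM : j < M := by omega
      have h1 := ih (by omega)
      have h2 := hstep ⟨j, hjM⟩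
      have hcs : (⟨j, hjM⟩ : Fin M).castSucc = (⟨j, by omega⟩ : Fin (M + 1)) := rfl
      have hsc : (⟨j, hjM⟩ : Fin M).succ = (⟨j + 1, by omega⟩ : Fin (M + 1)) := rfl
      rw [hcs, hsc] at h2
      rcases h2 with h2 | h2
      · rwa [← h2]
      · exact S.causal_trans h1 h2
  have := hchainw M le_rfl
  have hlast : (⟨M, by omega⟩ : Fin (M + 1)) = Fin.last M := rfl
  rw [hlast, hwM, hw0] at this
  exact this


lemma lipschitzOnWith_congr {f g : ℝ → X} {s : Set ℝ} {K : NNReal}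
    (h : LipschitzOnWith K f s) (he : Set.EqOn f g s) : LipschitzOnWith K g s := by
  intro x hx y hy
  rw [← he hx, ← he hy]
  exact h hx hy

lemma IsCausalCurveOn.shift {γ : ℝ → X} {u v c : ℝ} (h : S.IsCausalCurveOn γ (Icc u v)) :
    S.IsCausalCurveOn (fun t => γ (t + c)) (Icc (u - c) (v - c)) := by
  obtain ⟨-, ⟨s, hs, t, ht, hne⟩, hLL, hcaus⟩ := h
  have hmm : ∀ {y : ℝ}, y ∈ Icc (u - c) (v - c) → y + c ∈ Icc u v := by
    intro y hy
    exact ⟨by linarith [hy.1], by linarith [hy.2]⟩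
  refine ⟨ordConnected_Icc, ⟨s - c, ⟨by linarith [hs.1], by linarith [hs.2]⟩,
    t - c, ⟨by linarith [ht.1], by linarith [ht.2]⟩, by simpa using hne⟩, ?_, ?_⟩
  · intro y hy
    obtain ⟨K, U, hU, hL⟩ := hLL (y + c) (hmm hy)
    obtain ⟨V, hVo, hVm, hVs⟩ := mem_nhdsWithin.mp hU
    refine ⟨K, (fun z : ℝ => z + c) ⁻¹' U, ?_, ?_⟩
    · rw [mem_nhdsWithin]
      refine ⟨(fun z : ℝ => z + c) ⁻¹' V, hVo.preimage (continuous_add_right c), hVm, ?_⟩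
      intro z hz
      exact hVs ⟨hz.1, hmm hz.2⟩
    · rw [lipschitzOnWith_iff_dist_le_mul] at hL ⊢
      intro z hz w hw
      have := hL _ hz _ hw
      rwa [dist_add_right] at this
  · intro z hz w hw hlt
    exact hcaus (hmm hz) (hmm hw) (by linarith)

lemma paste {γ₁ γ₂ : ℝ → X} {u r v : ℝ} (hur : u < r) (hrv : r < v)
    (h1 : S.IsCausalCurveOn γ₁ (Icc u r)) (h2 : S.IsCausalCurveOn γ₂ (Icc r v))
    (hmatch : γ₁ r = γ₂ r) :
    ∃ F : ℝ → X, S.IsCausalCurveOn F (Icc u v) ∧ (∀ t ∈ Icc u r, F t = γ₁ t) ∧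
      (∀ t ∈ Icc r v, F t = γ₂ t) := by
  classical
  set F : ℝ → X := fun t => if t ≤ r then γ₁ t else γ₂ t with hF
  have hFl : ∀ t, t ≤ r → F t = γ₁ t := fun t ht => if_pos ht
  have hFr : ∀ t ∈ Icc r v, F t = γ₂ t := by
    intro t ht
    rcases lt_or_eq_of_le ht.1 with hlt | heq
    · exact if_neg (not_le.mpr hlt)
    · rw [← heq, hFl r le_rfl, hmatch]
  refine ⟨F, ⟨ordConnected_Icc, ?_, ?_, ?_⟩, fun t ht => hFl t ht.2, hFr⟩
  · -- nonconstant
    obtain ⟨s, hs, t, ht, hne⟩ := h1.2.1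
    refine ⟨s, ⟨hs.1, le_trans hs.2 hrv.le⟩, t, ⟨ht.1, le_trans ht.2 hrv.le⟩, ?_⟩
    rw [hFl s hs.2, hFl t ht.2]
    exact hne
  · -- locally Lipschitz
    intro t ht
    rcases lt_trichotomy t r with htr | htr | htr
    · obtain ⟨K, U, hU, hL⟩ := h1.2.2.1 t ⟨ht.1, htr.le⟩
      obtain ⟨V, hVo, hVm, hVs⟩ := mem_nhdsWithin.mp hU
      refine ⟨K, (V ∩ Iio r) ∩ Icc u v, ?_, ?_⟩
      · rw [mem_nhdsWithin]
        exact ⟨V ∩ Iio r, hVo.inter isOpen_Iio, ⟨hVm, htr⟩, fun z hz => hz⟩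
      · have hsub : (V ∩ Iio r) ∩ Icc u v ⊆ U := by
          intro z hz
          exact hVs ⟨hz.1.1, ⟨hz.2.1, le_of_lt hz.1.2⟩⟩
        refine lipschitzOnWith_congr (hL.mono hsub) ?_
        intro z hz
        exact (hFl z (le_of_lt hz.1.2)).symm
    · -- t = r : combine data from both sides
      subst htr
      obtain ⟨K₁, U₁, hU₁, hL₁⟩ := h1.2.2.1 t ⟨hur.le, le_rfl⟩
      obtain ⟨K₂, U₂, hU₂, hL₂⟩ := h2.2.2.1 t ⟨le_rfl, hrv.le⟩
      obtain ⟨V₁, hV₁o, hV₁m, hV₁s⟩ := mem_nhdsWithin.mp hU₁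
      obtain ⟨V₂, hV₂o, hV₂m, hV₂s⟩ := mem_nhdsWithin.mp hU₂
      refine ⟨max K₁ K₂, (V₁ ∩ V₂) ∩ Icc u v, ?_, ?_⟩
      · rw [mem_nhdsWithin]
        exact ⟨V₁ ∩ V₂, hV₁o.inter hV₂o, ⟨hV₁m, hV₂m⟩, fun z hz => hz⟩
      · rw [lipschitzOnWith_iff_dist_le_mul]
        have key : ∀ z ∈ (V₁ ∩ V₂) ∩ Icc u v, ∀ w ∈ (V₁ ∩ V₂) ∩ Icc u v, z ≤ w →
            dist (F z) (F w) ≤ (max K₁ K₂ : NNReal) * dist z w := by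
          intro z hz w hw hzw
          have hKl : (K₁ : ℝ) ≤ ((max K₁ K₂ : NNReal) : ℝ) := by
            exact_mod_cast le_max_left K₁ K₂
          have hKr : (K₂ : ℝ) ≤ ((max K₁ K₂ : NNReal) : ℝ) := by
            exact_mod_cast le_max_right K₁ K₂
          have hL₁' := lipschitzOnWith_iff_dist_le_mul.mp hL₁
          have hL₂' := lipschitzOnWith_iff_dist_le_mul.mp hL₂
          have hrU₁ : t ∈ U₁ := hV₁s ⟨hV₁m, ⟨hur.le, le_rfl⟩⟩
          have hrU₂ : t ∈ U₂ := hV₂s ⟨hV₂m, ⟨le_rfl, hrv.le⟩⟩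
          by_cases hwr : w ≤ t
          · -- both in left piece
            have hzU : z ∈ U₁ := hV₁s ⟨hz.1.1, ⟨hz.2.1, le_trans hzw hwr⟩⟩
            have hwU : w ∈ U₁ := hV₁s ⟨hw.1.1, ⟨hw.2.1, hwr⟩⟩
            rw [hFl z (le_trans hzw hwr), hFl w hwr]
            calc dist (γ₁ z) (γ₁ w) ≤ (K₁ : ℝ) * dist z w := hL₁' z hzU w hwU
              _ ≤ _ := by
                apply mul_le_mul_of_nonneg_right hKl dist_nonneg
          · push_neg at hwr
            by_cases hzr : t ≤ z
            · -- both in right piece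
              have hzU : z ∈ U₂ := hV₂s ⟨hz.1.2, ⟨hzr, hz.2.2⟩⟩
              have hwU : w ∈ U₂ := hV₂s ⟨hw.1.2, ⟨hzr.trans hzw, hw.2.2⟩⟩
              rw [hFr z ⟨hzr, hz.2.2⟩, hFr w ⟨hzr.trans hzw, hw.2.2⟩]
              calc dist (γ₂ z) (γ₂ w) ≤ (K₂ : ℝ) * dist z w := hL₂' z hzU w hwU
                _ ≤ _ := by
                  apply mul_le_mul_of_nonneg_right hKr dist_nonneg
            · push_neg at hzr
              -- z < t < w : triangle through t
              have hzU : z ∈ U₁ := hV₁s ⟨hz.1.1, ⟨hz.2.1, hzr.le⟩⟩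
              have hwU : w ∈ U₂ := hV₂s ⟨hw.1.2, ⟨hwr.le, hw.2.2⟩⟩
              have hd1 : dist (γ₁ z) (γ₁ t) ≤ (K₁ : ℝ) * (t - z) := by
                have := hL₁' z hzU t hrU₁
                rwa [Real.dist_eq, abs_of_nonpos (by linarith), neg_sub] at this
              have hd2 : dist (γ₂ t) (γ₂ w) ≤ (K₂ : ℝ) * (w - t) := by
                have := hL₂' t hrU₂ w hwU
                rwa [Real.dist_eq, abs_of_nonpos (by linarith), neg_sub] at this
              rw [hFl z hzr.le, hFr w ⟨hwr.le, hw.2.2⟩]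
              have hdz : dist z w = w - z := by
                rw [Real.dist_eq, abs_of_nonpos (by linarith), neg_sub]
              calc dist (γ₁ z) (γ₂ w) ≤ dist (γ₁ z) (γ₁ t) + dist (γ₁ t) (γ₂ w) :=
                    dist_triangle _ _ _
                _ = dist (γ₁ z) (γ₁ t) + dist (γ₂ t) (γ₂ w) := by rw [hmatch]
                _ ≤ (K₁ : ℝ) * (t - z) + (K₂ : ℝ) * (w - t) := add_le_add hd1 hd2
                _ ≤ ((max K₁ K₂ : NNReal) : ℝ) * (t - z) + ((max K₁ K₂ : NNReal) : ℝ) * (w - t) := by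
                    have h0 : (0:ℝ) ≤ t - z := by linarith
                    have h0' : (0:ℝ) ≤ w - t := by linarith
                    exact add_le_add (mul_le_mul_of_nonneg_right hKl h0)
                      (mul_le_mul_of_nonneg_right hKr h0')
                _ = ((max K₁ K₂ : NNReal) : ℝ) * (w - z) := by ring
                _ = _ := by rw [hdz]
        intro z hz w hw
        rcases le_total z w with h | h
        · exact key z hz w hw h
        · rw [dist_comm, dist_comm z w]
          exact key w hw z hz h
    · obtain ⟨K, U, hU, hL⟩ := h2.2.2.1 t ⟨htr.le, ht.2⟩
      obtain ⟨V, hVo, hVm, hVs⟩ := mem_nhdsWithin.mp hU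
      refine ⟨K, (V ∩ Ioi r) ∩ Icc u v, ?_, ?_⟩
      · rw [mem_nhdsWithin]
        exact ⟨V ∩ Ioi r, hVo.inter isOpen_Ioi, ⟨hVm, htr⟩, fun z hz => hz⟩
      · have hsub : (V ∩ Ioi r) ∩ Icc u v ⊆ U := by
          intro z hz
          exact hVs ⟨hz.1.1, ⟨le_of_lt hz.1.2, hz.2.2⟩⟩
        refine lipschitzOnWith_congr (hL.mono hsub) ?_
        intro z hz
        exact (if_neg (not_le.mpr hz.1.2)).symm
  · -- causality
    intro z hz w hw hlt
    by_cases hwr : w ≤ r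
    · rw [hFl z (le_trans hlt.le hwr), hFl w hwr]
      exact h1.2.2.2 ⟨hz.1, le_trans hlt.le hwr⟩ ⟨hw.1, hwr⟩ hlt
    · push_neg at hwr
      rw [hFr w ⟨hwr.le, hw.2⟩]
      by_cases hzr : z ≤ r
      · rw [hFl z hzr]
        have hc2 : S.causal (γ₂ r) (γ₂ w) := by
          rcases lt_or_eq_of_le hwr.le with h | h
          · exact h2.2.2.2 ⟨le_rfl, hrv.le⟩ ⟨hwr.le, hw.2⟩ hwr
          · rw [h]; exact S.causal_refl _
        have hc1 : S.causal (γ₁ z) (γ₁ r) := by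
          rcases lt_or_eq_of_le hzr with h | h
          · exact h1.2.2.2 ⟨hz.1, hzr⟩ ⟨hur.le, le_rfl⟩ h
          · rw [h]; exact S.causal_refl _
        exact S.causal_trans hc1 (hmatch ▸ hc2)
      · push_neg at hzr
        rw [hFr z ⟨hzr.le, le_trans hlt.le hw.2⟩]
        exact h2.2.2.2 ⟨hzr.le, le_trans hlt.le hw.2⟩ ⟨hwr.le, hw.2⟩ hlt


lemma causal_antisymm (hCPC : S.CausallyPathConnected) (hNTI : S.NonTotallyImprisoning)
    {p q : X} (hpq : S.causal p q) (hqp : S.causal q p) : p = q := by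
  by_contra hne
  obtain ⟨α, a, b, hab, hα, hαa, hαb⟩ := hCPC.2 p q ⟨hpq, hne⟩
  obtain ⟨β, c, d, hcd, hβ, hβc, hβd⟩ := hCPC.2 q p ⟨hqp, Ne.symm hne⟩
  set p1 : ℝ := b - a with hp1def
  set p2 : ℝ := d - c with hp2def
  set P : ℝ := p1 + p2 with hPdef
  have hp1 : 0 < p1 := by rw [hp1def]; linarith
  have hp2 : 0 < p2 := by rw [hp2def]; linarith
  have hP : 0 < P := by rw [hPdef]; linarith
  have hp1P : p1 < P := by rw [hPdef]; linarith
  -- the base loop F on [0, P]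
  have hA : S.IsCausalCurveOn (fun t => α (t + a)) (Icc 0 p1) := by
    have h := hα.shift (c := a)
    have e1 : a - a = 0 := sub_self a
    rw [e1] at h
    exact h
  have hB : S.IsCausalCurveOn (fun t => β (t + (c - p1))) (Icc p1 P) := by
    have h := hβ.shift (c := c - p1)
    have e1 : c - (c - p1) = p1 := by ring
    have e2 : d - (c - p1) = P := by rw [hPdef, hp2def]; ring
    rw [e1, e2] at h
    exact h
  have hmatch : (fun t => α (t + a)) p1 = (fun t => β (t + (c - p1))) p1 := by
    show α (p1 + a) = β (p1 + (c - p1))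
    have e1 : p1 + a = b := by rw [hp1def]; ring
    have e2 : p1 + (c - p1) = c := by ring
    rw [e1, e2, hαb, hβc]
  obtain ⟨F, hF, hFlval, hFrval⟩ := paste hp1 hp1P hA hB hmatch
  have hF0 : F 0 = p := by
    rw [hFlval 0 ⟨le_rfl, hp1.le⟩]
    show α (0 + a) = p
    rw [zero_add, hαa]
  have hFp1 : F p1 = q := by
    rw [hFlval p1 ⟨hp1.le, le_rfl⟩]
    show α (p1 + a) = q
    have e1 : p1 + a = b := by rw [hp1def]; ring
    rw [e1, hαb]
  have hFP : F P = p := by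
    rw [hFrval P ⟨hp1P.le, le_rfl⟩]
    show β (P + (c - p1)) = p
    have e1 : P + (c - p1) = d := by rw [hPdef, hp2def]; ring
    rw [e1, hβd]
  have hFc : ContinuousOn F (Icc 0 P) := hF.2.2.1.continuousOn
  set KK : Set X := F '' Icc 0 P with hKKdef
  have hKK : IsCompact KK := isCompact_Icc.image_of_continuousOn hFc
  obtain ⟨C, hC, hbound⟩ := hNTI KK hKK
  -- iterated loops
  have main : ∀ N : ℕ, ∃ Γ : ℝ → X, S.IsCausalCurveOn Γ (Icc 0 (((N : ℝ) + 1) * P)) ∧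
      (∀ t ∈ Icc (0 : ℝ) (((N : ℝ) + 1) * P), Γ t ∈ KK) ∧
      (∀ k : ℕ, (k : ℝ) ≤ (N : ℝ) + 1 → Γ ((k : ℝ) * P) = p) ∧
      (∀ k : ℕ, (k : ℝ) ≤ (N : ℝ) → Γ ((k : ℝ) * P + p1) = q) := by
    intro N
    induction N with
    | zero =>
      have e1 : ((0 : ℕ) : ℝ) + 1 = 1 := by norm_num
      refine ⟨F, ?_, ?_, ?_, ?_⟩
      · rw [e1, one_mul]; exact hF
      · rw [e1, one_mul]; intro t ht; exact mem_image_of_mem F ht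
      · intro k hk
        rw [e1] at hk
        have hk0 : k = 0 ∨ k = 1 := by
          have : k ≤ 1 := by exact_mod_cast hk
          omega
        rcases hk0 with h | h
        · subst h; simpa using hF0
        · subst h; simpa using hFP
      · intro k hk
        have h0 : (k : ℝ) ≤ 0 := by simpa using hk
        have h1 : k ≤ 0 := by exact_mod_cast h0
        have hk0 : k = 0 := by omega
        subst hk0
        simpa using hFp1
    | succ N ih =>
      obtain ⟨Γ, hΓ, hΓmem, hΓp, hΓq⟩ := ih
      set s0 : ℝ := ((N : ℝ) + 1) * P with hs0def
      have hs0 : 0 < s0 := by positivity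
      -- shifted copy of F on [s0, s0 + P]
      have hG : S.IsCausalCurveOn (fun t => F (t + (-s0))) (Icc s0 (s0 + P)) := by
        have h := hF.shift (c := -s0)
        have e1 : 0 - (-s0) = s0 := by ring
        have e2 : P - (-s0) = s0 + P := by ring
        rw [e1, e2] at h
        exact h
      have hmatch2 : Γ s0 = (fun t => F (t + (-s0))) s0 := by
        show Γ s0 = F (s0 + (-s0))
        have e1 : s0 + (-s0) = 0 := by ring
        rw [e1, hF0]
        have := hΓp (N + 1) (by push_cast; linarith)
        rwa [show (((N + 1 : ℕ) : ℝ)) * P = s0 by push_cast [hs0def]; ring] at this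
      obtain ⟨Γ', hΓ', hΓ'l, hΓ'r⟩ := paste hs0 (by linarith) hΓ hG hmatch2
      have ecast : (((N + 1 : ℕ) : ℝ) + 1) * P = s0 + P := by push_cast [hs0def]; ring
      refine ⟨Γ', ?_, ?_, ?_, ?_⟩
      · rw [ecast]; exact hΓ'
      · rw [ecast]
        intro t ht
        by_cases hts : t ≤ s0
        · rw [hΓ'l t ⟨ht.1, hts⟩]
          exact hΓmem t ⟨ht.1, hts⟩
        · push_neg at hts
          rw [hΓ'r t ⟨hts.le, ht.2⟩]
          exact mem_image_of_mem F ⟨by linarith, by linarith [ht.2]⟩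
      · intro k hk
        push_cast at hk
        by_cases hkN : (k : ℝ) ≤ (N : ℝ) + 1
        · have hmem : (k : ℝ) * P ∈ Icc 0 s0 := by
            constructor
            · positivity
            · rw [hs0def]; exact mul_le_mul_of_nonneg_right hkN hP.le
          rw [hΓ'l _ hmem]
          exact hΓp k hkN
        · push_neg at hkN
          have hk2 : (k : ℝ) = (N : ℝ) + 2 := by
            have h1 : (N : ℕ) + 1 < k := by exact_mod_cast hkN
            have h2 : k ≤ N + 2 := by exact_mod_cast hk
            have : k = N + 2 := by omega
            rw [this]; push_cast; ring
          have hpt : (k : ℝ) * P = s0 + P := by rw [hk2, hs0def]; ring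
          rw [hpt, hΓ'r _ ⟨by linarith, le_rfl⟩]
          show F (s0 + P + (-s0)) = p
          have e1 : s0 + P + (-s0) = P := by ring
          rw [e1, hFP]
      · intro k hk
        push_cast at hk
        by_cases hkN : (k : ℝ) ≤ (N : ℝ)
        · have hmem : (k : ℝ) * P + p1 ∈ Icc 0 s0 := by
            constructor
            · have : (0:ℝ) ≤ (k : ℝ) * P := by positivity
              linarith
            · rw [hs0def]
              have h1 : (k : ℝ) * P ≤ (N : ℝ) * P := mul_le_mul_of_nonneg_right hkN hP.le
              have h2 : ((N : ℝ) + 1) * P = (N : ℝ) * P + P := by ring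
              rw [h2]
              linarith
          rw [hΓ'l _ hmem]
          exact hΓq k hkN
        · push_neg at hkN
          have hk2 : (k : ℝ) = (N : ℝ) + 1 := by
            have h1 : (N : ℕ) < k := by exact_mod_cast hkN
            have h2 : k ≤ N + 1 := by exact_mod_cast hk
            have : k = N + 1 := by omega
            rw [this]; push_cast; ring
          have hpt : (k : ℝ) * P + p1 = s0 + p1 := by rw [hk2, hs0def]
          rw [hpt, hΓ'r _ ⟨by linarith, by linarith⟩]
          show F (s0 + p1 + (-s0)) = q
          have e1 : s0 + p1 + (-s0) = p1 := by ring
          rw [e1, hFp1]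
  -- derive the contradiction
  have hdpq : 0 < dist p q := dist_pos.mpr hne
  obtain ⟨N, hN⟩ := exists_nat_gt (C / dist p q)
  obtain ⟨Γ, hΓ, hΓmem, hΓp, hΓq⟩ := main N
  have hlen := hbound Γ 0 (((N : ℝ) + 1) * P) (by positivity) hΓ hΓmem
  -- partition with 2N+2 alternating edges
  set m2 : ℕ := 2 * N + 2 with hm2def
  set u : Fin (m2 + 1) → ℝ :=
    fun i => (((i : ℕ) / 2 : ℕ) : ℝ) * P + (if (i : ℕ) % 2 = 1 then p1 else 0) with hudef
  have hval : ∀ i : Fin (m2 + 1),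
      u i = (((i : ℕ) / 2 : ℕ) : ℝ) * P + (if (i : ℕ) % 2 = 1 then p1 else 0) := by
    intro i; rw [hudef]
  have humono : StrictMono u := by
    rw [Fin.strictMono_iff_lt_succ]
    intro i
    have hic : (i.castSucc : ℕ) = (i : ℕ) := rfl
    have his : (i.succ : ℕ) = (i : ℕ) + 1 := rfl
    rw [hval i.castSucc, hval i.succ, hic, his]
    rcases Nat.mod_two_eq_zero_or_one (i : ℕ) with hpar | hpar
    · have hdiv : ((i : ℕ) + 1) / 2 = (i : ℕ) / 2 := by omega
      have hmod : ((i : ℕ) + 1) % 2 = 1 := by omega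
      rw [hdiv, if_pos hmod, if_neg (by omega)]
      simpa using hp1
    · have hdiv : ((i : ℕ) + 1) / 2 = (i : ℕ) / 2 + 1 := by omega
      have hmod : ((i : ℕ) + 1) % 2 = 0 := by omega
      rw [hdiv, if_pos hpar, if_neg (by omega)]
      push_cast
      nlinarith
  have hu0 : u 0 = 0 := by
    rw [hval 0]
    norm_num
  have hulast : u (Fin.last m2) = ((N : ℝ) + 1) * P := by
    rw [hval (Fin.last m2)]
    have hlv : ((Fin.last m2 : Fin (m2 + 1)) : ℕ) = m2 := rfl
    rw [hlv]
    have h1 : m2 / 2 = N + 1 := by omega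
    have h2 : m2 % 2 = 0 := by omega
    rw [h1, if_neg (by omega)]
    push_cast
    ring
  -- values of Γ at partition points
  have huval : ∀ i : Fin (m2 + 1), Γ (u i) = (if (i : ℕ) % 2 = 1 then q else p) := by
    intro i
    have hiub : (i : ℕ) ≤ m2 := by omega
    rcases Nat.mod_two_eq_zero_or_one (i : ℕ) with hpar | hpar
    · have he : u i = (((i : ℕ) / 2 : ℕ) : ℝ) * P := by
        rw [hval i, if_neg (by omega)]; ring
      rw [he, if_neg (by omega)]
      apply hΓp
      have h1 : (i : ℕ) / 2 ≤ N + 1 := by omega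
      calc ((((i : ℕ) / 2 : ℕ)) : ℝ) ≤ ((N + 1 : ℕ) : ℝ) := by exact_mod_cast h1
        _ = (N : ℝ) + 1 := by push_cast; ring
    · have he : u i = (((i : ℕ) / 2 : ℕ) : ℝ) * P + p1 := by
        rw [hval i, if_pos hpar]
      rw [he, if_pos hpar]
      apply hΓq
      have h1 : (i : ℕ) / 2 ≤ N := by omega
      exact_mod_cast h1
  have hterm : ∀ i : Fin m2, edist (Γ (u i.castSucc)) (Γ (u i.succ)) = ENNReal.ofReal (dist p q) := by
    intro i
    have hic : (i.castSucc : ℕ) = (i : ℕ) := rfl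
    have his : (i.succ : ℕ) = (i : ℕ) + 1 := rfl
    rw [huval i.castSucc, huval i.succ, hic, his]
    rcases Nat.mod_two_eq_zero_or_one (i : ℕ) with hpar | hpar
    · rw [if_neg (by omega), if_pos (by omega)]
      exact edist_dist p q
    · rw [if_pos hpar, if_neg (by omega)]
      rw [edist_dist, dist_comm]
  have hsum : ∑ i : Fin m2, edist (Γ (u i.castSucc)) (Γ (u i.succ))
      = (m2 : ℝ≥0∞) * ENNReal.ofReal (dist p q) := by
    rw [Finset.sum_congr rfl (fun i _ => hterm i)]
    rw [Finset.sum_const, Finset.card_univ, Fintype.card_fin, nsmul_eq_mul]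
  have hle : (m2 : ℝ≥0∞) * ENNReal.ofReal (dist p q) ≤ ENNReal.ofReal C := by
    rw [← hsum]
    refine le_trans ?_ hlen
    rw [dLength]
    refine le_iSup_of_le m2 ?_
    refine le_iSup_of_le u ?_
    refine le_iSup_of_le humono ?_
    refine le_iSup_of_le hu0 ?_
    exact le_iSup_of_le hulast le_rfl
  have hle2 : ENNReal.ofReal ((m2 : ℝ) * dist p q) ≤ ENNReal.ofReal C := by
    rwa [ENNReal.ofReal_mul (by positivity), ENNReal.ofReal_natCast]
  have hle3 : (m2 : ℝ) * dist p q ≤ C := (ENNReal.ofReal_le_ofReal_iff hC.le).mp hle2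
  have hNlt : C < (m2 : ℝ) * dist p q := by
    have h1 : C < (N : ℝ) * dist p q := by
      rw [div_lt_iff₀ hdpq] at hN
      linarith
    have h2 : (N : ℝ) ≤ (m2 : ℝ) := by
      rw [hm2def]; push_cast; linarith
    nlinarith
  linarith

end LorentzianPreLength

open LorentzianPreLength in
/-- In a globally hyperbolic Lorentzian length space, for a chronologically increasing
sequence with a subsequence converging to `x∞`, the set
`⋂ k, J⁺(x_{n(k)}) ∩ J⁻(x∞)` is exactly `{x∞}` (equation (3.1) in the paper). -/
theorem iInter_futureCone_inter_pastCone_eq_singleton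
    {X : Type*} [MetricSpace X] (S : LorentzianPreLength X)
    (hLLS : S.IsLorentzianLengthSpace) (hGH : S.GloballyHyperbolic)
    (x : ℕ → X) (hchain : ∀ n, S.chron (x n) (x (n + 1)))
    (n : ℕ → ℕ) (hn : StrictMono n) (xinf : X)
    (hconv : Filter.Tendsto (fun k => x (n k)) Filter.atTop (nhds xinf)) :
    (⋂ k : ℕ, {y : X | S.causal (x (n k)) y}) ∩ {y : X | S.causal y xinf} = {xinf} := by
  obtain ⟨hCPC, hWCC, hLoc, hLL⟩ := hLLS
  obtain ⟨hNTI, hJcomp⟩ := hGH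
  have hchron : ∀ k, S.chron (x (n k)) xinf := fun k => causal_lim hLoc hchain hn hconv k
  apply Set.eq_singleton_iff_unique_mem.mpr
  constructor
  · exact ⟨Set.mem_iInter.mpr (fun k => S.chron_imp_causal (hchron k)), S.causal_refl xinf⟩
  · rintro y ⟨hy1, hy2⟩
    have hy1' : ∀ k, S.causal (x (n k)) y := fun k => Set.mem_iInter.mp hy1 k
    have hy2' : S.causal y xinf := hy2
    have hchy : ∀ k, S.chron (x (n k)) y := by
      intro k
      have hkk : S.chron (x (n k)) (x (n (k + 1))) :=
        chron_of_lt hchain (hn (Nat.lt_succ_self k))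
      have h1 : 0 < S.tau (x (n k)) (x (n (k + 1))) := (S.tau_pos_iff _ _).mpr hkk
      have h2 := S.tau_rev_triangle (S.chron_imp_causal hkk) (hy1' (k + 1))
      exact (S.tau_pos_iff _ _).mp (lt_of_lt_of_le h1 (le_trans le_self_add h2))
    set K := {z : X | S.causal (x (n 0)) z ∧ S.causal z xinf} with hKdef
    have hKcomp : IsCompact K := hJcomp _ _
    have curves : ∀ k, ∃ γ : ℝ → X, ∃ a b : ℝ, a < b ∧ S.IsCausalCurveOn γ (Icc a b) ∧
        γ a = x (n k) ∧ γ b = y ∧ ∀ t ∈ Icc a b, γ t ∈ K := by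
      intro k
      obtain ⟨γ, a, b, hab, hγ, hγa, hγb⟩ := hCPC.1 _ _ (hchy k)
      have hγc : S.IsCausalCurveOn γ (Icc a b) :=
        ⟨hγ.1, hγ.2.1, hγ.2.2.1, fun s hs t ht hst => S.chron_imp_causal (hγ.2.2.2 hs ht hst)⟩
      refine ⟨γ, a, b, hab, hγc, hγa, hγb, ?_⟩
      intro t ht
      constructor
      · have h1 : S.causal (x (n 0)) (x (n k)) := by
          rcases Nat.eq_zero_or_pos k with h | h
          · subst h; exact S.causal_refl _
          · exact S.chron_imp_causal (chron_of_lt hchain (hn h))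
        have h2 : S.causal (x (n k)) (γ t) := by
          rcases lt_or_eq_of_le ht.1 with h | h
          · have := hγc.2.2.2 ⟨le_rfl, hab.le⟩ ht h
            rwa [hγa] at this
          · rw [← h, hγa]; exact S.causal_refl _
        exact S.causal_trans h1 h2
      · have h2 : S.causal (γ t) y := by
          rcases lt_or_eq_of_le ht.2 with h | h
          · have := hγc.2.2.2 ht ⟨hab.le, le_rfl⟩ h
            rwa [hγb] at this
          · rw [h, hγb]; exact S.causal_refl _
        exact S.causal_trans h2 hy2'
    have hcxy : S.causal xinf y := causal_limit_of_curves hWCC hNTI hKcomp hconv curves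
    exact causal_antisymm hCPC hNTI hy2' hcxy
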